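/- arXiv:1007.3386 — 3 statements merged into one kernel-verified Lean document; each statement's English description precedes it below -/
import Mathlib

section
/- Suppose k satisfies k(x,s) ≤ k(x+λ, s+λ) for all λ ≥ 0 and all (x,s). If v is a subsolution of u(x) = ∫₀ˣ k(x,s) g(u(s)) ds, then for every c > 0, the shifted function v_c defined by v_c(x) = 0 for x ∈ [0,c] and v_c(x) = v(x−c) for x > c is also a subsolution. -/
open MeasureTheory Set Filter

/-! The shifted function vanishes on `[0, c]`, so its integral equation only sees `(c, x]`, and
the substitution `s = t + c` turns it into the equation of `v` at `x - c`, with the kernel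
`k (x - c) t` enlarged to `k x (t + c)` by translation monotonicity. -/

theorem intervalIntegral_ite_shift_eq_setIntegral {G : ℝ → ℝ → ℝ} (hG : ∀ s, G s 0 = 0)
    (v : ℝ → ℝ) {c x : ℝ} (hc : 0 ≤ c) (hx : 0 ≤ x) :
    ∫ s in (0:ℝ)..x, G s (if s ≤ c then 0 else v (s - c)) = ∫ s in Ioc c x, G s (v (s - c)) := by
  rw [intervalIntegral.integral_of_le hx,
    setIntegral_eq_of_subset_of_forall_sdiff_eq_zero measurableSet_Ioc
      (Ioc_subset_Ioc_left hc) fun s hs => ?_]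
  · exact setIntegral_congr_fun measurableSet_Ioc fun s hs => by simp [not_le.2 hs.1]
  · have hsc : s ≤ c := by_contra fun h => hs.2 ⟨not_le.1 h, hs.1.2⟩
    simp [hsc, hG]

theorem intervalIntegral_le_of_kernel_translate_le {k : ℝ → ℝ → ℝ} {φ : ℝ → ℝ} {c x : ℝ}
    (hk_trans : ∀ x s l : ℝ, 0 ≤ l → k x s ≤ k (x + l) (s + l)) (hφ : ∀ s, 0 ≤ φ s)
    (hc : 0 ≤ c) (hcx : c ≤ x)
    (h_left : IntervalIntegrable (fun s => k (x - c) s * φ s) volume 0 (x - c))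
    (h_right : IntervalIntegrable (fun s => k x s * φ (s - c)) volume c x) :
    ∫ s in (0:ℝ)..(x - c), k (x - c) s * φ s ≤ ∫ s in c..x, k x s * φ (s - c) := by
  have h_sub : ∫ t in (0:ℝ)..(x - c), k x (t + c) * φ t = ∫ s in c..x, k x s * φ (s - c) := by
    simpa using intervalIntegral.integral_comp_add_right (fun s => k x s * φ (s - c)) c
      (a := 0) (b := x - c)
  have h_right' : IntervalIntegrable (fun t => k x (t + c) * φ t) volume 0 (x - c) := by
    simpa using h_right.comp_add_right c
  rw [← h_sub]
  refine intervalIntegral.integral_mono_on (sub_nonneg.2 hcx) h_left h_right' fun t _ => ?_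
  have hk := hk_trans (x - c) t c hc
  rw [sub_add_cancel] at hk
  exact mul_le_mul_of_nonneg_right hk (hφ t)

theorem shifted_subsolution_general
    (k : ℝ → ℝ → ℝ) (g v : ℝ → ℝ) (c : ℝ)
    (hk_trans : ∀ x s l : ℝ, 0 ≤ l → k x s ≤ k (x + l) (s + l))
    (hg_nonneg : ∀ t, 0 ≤ g t)
    (hg_zero : g 0 = 0)
    (hv_meas : Measurable v)
    (h_int : ∀ (f : ℝ → ℝ), Measurable f → ∀ x,
      IntervalIntegrable (fun s => k x s * g (f s)) volume 0 x)
    (hv_sub : ∀ x, 0 ≤ x → v x ≤ ∫ s in (0:ℝ)..x, k x s * g (v s))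
    (hc : 0 < c) :
    ∀ x, 0 ≤ x →
      (if x ≤ c then 0 else v (x - c)) ≤
        ∫ s in (0:ℝ)..x, k x s * g (if s ≤ c then 0 else v (s - c)) := by
  intro x hx
  rw [intervalIntegral_ite_shift_eq_setIntegral (G := fun s y => k x s * g y)
    (by simp [hg_zero]) v hc.le hx]
  split_ifs with hxc
  · simp [Ioc_eq_empty (not_lt.2 hxc)]
  push Not at hxc
  have h_right : IntervalIntegrable (fun s => k x s * g (v (s - c))) volume c x :=
    (h_int _ (hv_meas.comp (measurable_sub_const c)) x).mono_set <| by
      rw [uIcc_of_le hxc.le, uIcc_of_le hx]; exact Icc_subset_Icc_left hc.le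
  calc v (x - c) ≤ ∫ s in (0:ℝ)..(x - c), k (x - c) s * g (v s) := hv_sub _ (by linarith)
    _ ≤ ∫ s in c..x, k x s * g (v (s - c)) :=
      intervalIntegral_le_of_kernel_translate_le hk_trans (fun s => hg_nonneg _) hc.le hxc.le
        (h_int v hv_meas _) h_right
    _ = ∫ s in Ioc c x, k x s * g (v (s - c)) := intervalIntegral.integral_of_le hxc.le

theorem shifted_subsolution
    (k : ℝ → ℝ → ℝ) (g v : ℝ → ℝ) (c : ℝ)
    (hk_nonneg : ∀ x s, 0 ≤ k x s)
    (hk_zero : ∀ x s, x < s → k x s = 0)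
    (hk_trans : ∀ x s l : ℝ, 0 ≤ l → k x s ≤ k (x + l) (s + l))
    (hg_mono : Monotone g)
    (hg_nonneg : ∀ t, 0 ≤ g t)
    (hg_zero : g 0 = 0)
    (hv_meas : Measurable v)
    (hv_nonneg : ∀ x, 0 ≤ v x)
    (h_int : ∀ (f : ℝ → ℝ), Measurable f → ∀ x,
      IntervalIntegrable (fun s => k x s * g (f s)) volume 0 x)
    (hv_sub : ∀ x, 0 ≤ x → v x ≤ ∫ s in (0:ℝ)..x, k x s * g (v s))
    (hc : 0 < c) :
    ∀ x, 0 ≤ x →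
      (if x ≤ c then 0 else v (x - c)) ≤
        ∫ s in (0:ℝ)..x, k x s * g (if s ≤ c then 0 else v (s - c)) :=
  shifted_subsolution_general k g v c hk_trans hg_nonneg hg_zero hv_meas h_int hv_sub hc
end

section
/- Assume (GC), K continuous, and k(x,s) ≤ k(x+λ,s+λ) for λ ≥ 0. Then every continuous subsolution v of u(x) = ∫₀ˣ k(x,s)g(u(s)) ds is bounded above by any continuous positive solution u of the same equation: v ≤ u on the common domain. -/
/-!
For `l > 0` the translate `u (· + l)` is a supersolution: translation monotonicity of `k` gives
`∫₀ˣ k(x,s) g(u(s+l)) ds ≤ ∫ₗ^{x+l} k(x+l,s) g(u s) ds ≤ u(x+l)`, and `u l > 0 ≥ v 0`.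
At a first point `x > 0` where `v` would reach `u (· + l)`, we have `v < u (· + l)` on `[0, x)`,
so `g ∘ v < g ∘ u (· + l)` there; since `K x > 0`, `k(x, ·)` is not a.e. zero on `(0, x)` and the
integral inequality becomes strict, contradicting `u(x+l) ≤ v x`. Hence `v (y - l) < u y`, and
`l → 0⁺` together with the continuity of `v` gives `v ≤ u`.
-/

open MeasureTheory Set Filter Topology

theorem StrictMonoOn.monotone_of_eq_zero_of_nonpos {g : ℝ → ℝ} (hg_mono : StrictMonoOn g (Ici 0))
    (hg_zero : ∀ x ≤ (0:ℝ), g x = 0) : Monotone g := by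
  intro a b hab
  rcases le_total b 0 with hb | hb
  · rw [hg_zero a (hab.trans hb), hg_zero b hb]
  rcases le_total a 0 with ha | ha
  · rw [hg_zero a ha, ← hg_zero 0 le_rfl]
    exact hg_mono.monotoneOn self_mem_Ici hb hb
  · exact hg_mono.monotoneOn ha (ha.trans hab) hab

theorem StrictMonoOn.nonneg_of_eq_zero_of_nonpos {g : ℝ → ℝ} (hg_mono : StrictMonoOn g (Ici 0))
    (hg_zero : ∀ x ≤ (0:ℝ), g x = 0) (x : ℝ) : 0 ≤ g x :=
  calc 0 = g (min x 0) := (hg_zero _ (min_le_right x 0)).symm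
    _ ≤ g x := hg_mono.monotone_of_eq_zero_of_nonpos hg_zero (min_le_left x 0)

theorem StrictMonoOn.lt_of_eq_zero_of_nonpos {g : ℝ → ℝ} (hg_mono : StrictMonoOn g (Ici 0))
    (hg_zero : ∀ x ≤ (0:ℝ), g x = 0) {a b : ℝ} (hab : a < b) (hb : 0 < b) : g a < g b := by
  rcases le_total a 0 with ha | ha
  · calc g a = g 0 := by rw [hg_zero a ha, hg_zero 0 le_rfl]
      _ < g b := hg_mono self_mem_Ici hb.le hb
  · exact hg_mono ha (ha.trans hab.le) hab

theorem forall_lt_of_forall_Ico_lt {α β : Type*} [ConditionallyCompleteLinearOrder α]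
    [TopologicalSpace α] [OrderTopology α] [LinearOrder β] [TopologicalSpace β]
    [OrderClosedTopology β] {f h : α → β} {a b : α}
    (hf : ContinuousOn f (Icc a b)) (hh : ContinuousOn h (Icc a b))
    (hstep : ∀ x ∈ Icc a b, (∀ s ∈ Ico a x, f s < h s) → f x < h x) :
    ∀ x ∈ Icc a b, f x < h x := by
  by_contra! hcross
  set S := {x ∈ Icc a b | h x ≤ f x}
  have hS_bdd : BddBelow S := ⟨a, fun x hx => hx.1.1⟩
  have hmem : sInf S ∈ S :=
    (isClosed_Icc.isClosed_le hh hf).csInf_mem hcross hS_bdd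
  refine (hstep _ hmem.1 fun s hs => ?_).not_ge hmem.2
  by_contra! hsS
  exact (csInf_le hS_bdd ⟨⟨hs.1, hs.2.le.trans hmem.1.2⟩, hsS⟩).not_gt hs.2

theorem intervalIntegral.integral_mul_pos_of_integral_pos {k w : ℝ → ℝ} {a b : ℝ} (hab : a ≤ b)
    (hk : ∀ s ∈ Ioo a b, 0 ≤ k s) (hw : ∀ s ∈ Ioo a b, 0 < w s)
    (hkw : IntervalIntegrable (fun s => k s * w s) volume a b)
    (hK : 0 < ∫ s in a..b, k s) : 0 < ∫ s in a..b, k s * w s := by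
  have hk_int : IntegrableOn k (Ioo a b) :=
    (intervalIntegrable_of_integral_ne_zero hK.ne').1.mono_set Ioo_subset_Ioc_self
  rw [integral_of_le hab, integral_Ioc_eq_integral_Ioo] at hK ⊢
  rw [setIntegral_pos_iff_support_of_nonneg_ae
    (ae_restrict_of_forall_mem measurableSet_Ioo hk) hk_int] at hK
  rw [setIntegral_pos_iff_support_of_nonneg_ae
    (ae_restrict_of_forall_mem measurableSet_Ioo fun s hs => mul_nonneg (hk s hs) (hw s hs).le)
    (hkw.1.mono_set Ioo_subset_Ioc_self)]
  convert hK using 2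
  ext s
  simp only [mem_inter_iff, Function.mem_support, and_congr_left_iff]
  exact fun hs => mul_ne_zero_iff_right (hw s hs).ne'

theorem intervalIntegral.integral_mul_comp_add_le {k : ℝ → ℝ → ℝ} {F : ℝ → ℝ} {x l : ℝ}
    (hx : 0 ≤ x) (hl : 0 ≤ l) (hk_nonneg : ∀ s, 0 ≤ k (x + l) s)
    (hk_trans : ∀ s, k x s ≤ k (x + l) (s + l))
    (hk_int : IntervalIntegrable (k x) volume 0 x)
    (hk_int' : IntervalIntegrable (k (x + l)) volume 0 (x + l))
    (hF : ContinuousOn F (Icc 0 (x + l))) (hF_nonneg : ∀ s ∈ Icc 0 (x + l), 0 ≤ F s) :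
    ∫ s in 0..x, k x s * F (s + l) ≤ ∫ s in 0..x + l, k (x + l) s * F s := by
  have hxl : 0 ≤ x + l := add_nonneg hx hl
  have hint : IntervalIntegrable (fun s => k (x + l) s * F s) volume 0 (x + l) :=
    hk_int'.mul_continuousOn (by rwa [uIcc_of_le hxl])
  have hl_mem : l ∈ uIcc 0 (x + l) := mem_uIcc_of_le hl (by linarith)
  rw [← integral_add_adjacent_intervals
    (hint.mono_set (uIcc_subset_uIcc left_mem_uIcc hl_mem))
    (hint.mono_set (uIcc_subset_uIcc hl_mem right_mem_uIcc))]
  have hshift : ∫ s in 0..x, k (x + l) (s + l) * F (s + l)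
      = ∫ s in l..x + l, k (x + l) s * F s := by
    simpa using integral_comp_add_right (a := 0) (b := x) (fun s => k (x + l) s * F s) l
  have hF_shift : ∀ s ∈ Icc 0 x, s + l ∈ Icc 0 (x + l) :=
    fun s hs => ⟨by linarith [hs.1], by linarith [hs.2]⟩
  calc ∫ s in 0..x, k x s * F (s + l)
      ≤ ∫ s in 0..x, k (x + l) (s + l) * F (s + l) := by
        refine integral_mono_on hx ?_ ?_ fun s hs =>
          mul_le_mul_of_nonneg_right (hk_trans s) (hF_nonneg _ (hF_shift s hs))
        · refine hk_int.mul_continuousOn (hF.comp (continuous_add_const l).continuousOn ?_)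
          rw [uIcc_of_le hx]
          exact hF_shift
        · simpa using (hint.mono_set (uIcc_subset_uIcc hl_mem right_mem_uIcc)).comp_add_right l
    _ = ∫ s in l..x + l, k (x + l) s * F s := hshift
    _ ≤ (∫ s in 0..l, k (x + l) s * F s) + ∫ s in l..x + l, k (x + l) s * F s :=
        le_add_of_nonneg_left <| integral_nonneg hl fun s hs =>
          mul_nonneg (hk_nonneg s) (hF_nonneg s ⟨hs.1, by linarith [hs.2]⟩)

theorem subsolution_lt_solution_comp_add {k : ℝ → ℝ → ℝ} {g u v : ℝ → ℝ} {L l : ℝ}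
    (hk_nonneg : ∀ x s, 0 ≤ k x s)
    (hk_int : ∀ x r, IntervalIntegrable (k x) volume 0 r)
    (hK_pos : ∀ x > 0, 0 < ∫ s in (0:ℝ)..x, k x s)
    (hk_trans : ∀ x s, k x s ≤ k (x + l) (s + l))
    (hg_cont : Continuous g) (hg_mono : StrictMonoOn g (Ici 0))
    (hg_zero : ∀ x ≤ (0:ℝ), g x = 0)
    (hv_cont : ContinuousOn v (Icc 0 L))
    (hv_sub : ∀ x ∈ Icc 0 L, v x ≤ ∫ s in (0:ℝ)..x, k x s * g (v s))
    (hu_cont : ContinuousOn u (Icc 0 L))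
    (hu_pos : ∀ x ∈ Ioc 0 L, 0 < u x)
    (hu_sol : ∀ x ∈ Icc 0 L, u x = ∫ s in (0:ℝ)..x, k x s * g (u s))
    (hl : 0 < l) :
    ∀ x ∈ Icc 0 (L - l), v x < u (x + l) := by
  have hshift : ∀ x ∈ Icc 0 (L - l), x + l ∈ Ioc 0 L :=
    fun x hx => ⟨by linarith [hx.1], by linarith [hx.2]⟩
  have hu_shift : ContinuousOn (fun x => u (x + l)) (Icc 0 (L - l)) :=
    hu_cont.comp (continuous_add_const l).continuousOn fun x hx => Ioc_subset_Icc_self (hshift x hx)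
  refine forall_lt_of_forall_Ico_lt (hv_cont.mono (Icc_subset_Icc_right (by linarith)))
    hu_shift fun x hx hlt => ?_
  have hxL : x ∈ Icc 0 L := ⟨hx.1, by linarith [hx.2]⟩
  rcases hx.1.eq_or_lt with rfl | hx0
  · calc v 0 ≤ 0 := by simpa using hv_sub 0 hxL
      _ < u (0 + l) := hu_pos _ (hshift 0 hx)
  have hsuper : ∫ s in (0:ℝ)..x, k x s * g (u (s + l)) ≤ u (x + l) := by
    rw [hu_sol _ (Ioc_subset_Icc_self (hshift x hx))]
    exact intervalIntegral.integral_mul_comp_add_le hx.1 hl.le (hk_nonneg _) (hk_trans x)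
      (hk_int x x) (hk_int _ _)
      (hg_cont.comp_continuousOn (hu_cont.mono (Icc_subset_Icc_right (hshift x hx).2)))
      fun s _ => hg_mono.nonneg_of_eq_zero_of_nonpos hg_zero _
  have hint_v : IntervalIntegrable (fun s => k x s * g (v s)) volume 0 x :=
    (hk_int x x).mul_continuousOn <| (hg_cont.comp_continuousOn hv_cont).mono <| by
      rw [uIcc_of_le hx.1]; exact Icc_subset_Icc_right hxL.2
  have hint_u : IntervalIntegrable (fun s => k x s * g (u (s + l))) volume 0 x :=
    (hk_int x x).mul_continuousOn <| (hg_cont.comp_continuousOn hu_shift).mono <| by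
      rw [uIcc_of_le hx.1]; exact Icc_subset_Icc_right hx.2
  calc v x ≤ ∫ s in (0:ℝ)..x, k x s * g (v s) := hv_sub x hxL
    _ < ∫ s in (0:ℝ)..x, k x s * g (u (s + l)) := by
        rw [← sub_pos, ← intervalIntegral.integral_sub hint_u hint_v]
        simp_rw [← mul_sub]
        refine intervalIntegral.integral_mul_pos_of_integral_pos hx.1 (fun s _ => hk_nonneg x s)
          (fun s hs => sub_pos.2 <| hg_mono.lt_of_eq_zero_of_nonpos hg_zero
            (hlt s ⟨hs.1.le, hs.2⟩) (hu_pos _ (hshift s ⟨hs.1.le, hs.2.le.trans hx.2⟩)))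
          ?_ (hK_pos x hx0)
        simpa only [mul_sub] using hint_u.sub hint_v
    _ ≤ u (x + l) := hsuper

theorem subsolution_le_solution_general
    (k : ℝ → ℝ → ℝ) (g u v : ℝ → ℝ) (L : ℝ)
    (hk_nonneg : ∀ x s, 0 ≤ k x s)
    (hk_int : ∀ x r, IntervalIntegrable (fun s => k x s) volume 0 r)
    (hK_mono : StrictMonoOn (fun x => ∫ s in (0:ℝ)..x, k x s) (Set.Ici 0))
    (hk_trans : ∀ x s l : ℝ, 0 ≤ l → k x s ≤ k (x + l) (s + l))
    (hg_cont : Continuous g)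
    (hg_mono : StrictMonoOn g (Set.Ici 0))
    (hg_zero : ∀ x ≤ (0:ℝ), g x = 0)
    (hv_cont : ContinuousOn v (Set.Icc 0 L))
    (hv_sub : ∀ x ∈ Set.Icc (0:ℝ) L, v x ≤ ∫ s in (0:ℝ)..x, k x s * g (v s))
    (hu_cont : ContinuousOn u (Set.Icc 0 L))
    (hu_pos : ∀ x ∈ Set.Ioc (0:ℝ) L, 0 < u x)
    (hu_sol : ∀ x ∈ Set.Icc (0:ℝ) L, u x = ∫ s in (0:ℝ)..x, k x s * g (u s)) :
    ∀ x ∈ Set.Icc (0:ℝ) L, v x ≤ u x := by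
  have hK_pos : ∀ x > 0, 0 < ∫ s in (0:ℝ)..x, k x s := fun x hx => by
    simpa using hK_mono self_mem_Ici hx.le hx
  intro y hy
  rcases hy.1.eq_or_lt with rfl | hy0
  · rw [hu_sol 0 hy, intervalIntegral.integral_same]
    simpa using hv_sub 0 hy
  have hlt : ∀ z ∈ Ioo 0 y, v z < u y := fun z hz => by
    have hl : 0 < y - z := sub_pos.2 hz.2
    simpa using subsolution_lt_solution_comp_add hk_nonneg hk_int hK_pos
      (fun x s => hk_trans x s _ hl.le) hg_cont hg_mono hg_zero hv_cont hv_sub hu_cont hu_pos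
      hu_sol hl z ⟨hz.1.le, by linarith [hy.2]⟩
  have hv_left : Tendsto v (𝓝[<] y) (𝓝 (v y)) :=
    ((hv_cont y hy).mono_of_mem_nhdsWithin (mem_of_superset (Ioo_mem_nhdsLT hy0)
      (Ioo_subset_Icc_self.trans (Icc_subset_Icc_right hy.2)))).tendsto
  exact le_of_tendsto hv_left (eventually_of_mem (Ioo_mem_nhdsLT hy0) fun z hz => (hlt z hz).le)

theorem subsolution_le_solution
    (k : ℝ → ℝ → ℝ) (g u v : ℝ → ℝ) (L : ℝ)
    (hk_nonneg : ∀ x s, 0 ≤ k x s)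
    (hk_zero : ∀ x s, x < s → k x s = 0)
    (hk_bdd : ∀ r > (0:ℝ), ∃ C, ∀ x ∈ Set.Icc (-r) r, ∀ s ∈ Set.Icc (-r) r, k x s ≤ C)
    (hk_int : ∀ x r, IntervalIntegrable (fun s => k x s) volume 0 r)
    (hK_mono : StrictMonoOn (fun x => ∫ s in (0:ℝ)..x, k x s) (Set.Ici 0))
    (hK_cont : Continuous (fun x => ∫ s in (0:ℝ)..x, k x s))
    (hk_trans : ∀ x s l : ℝ, 0 ≤ l → k x s ≤ k (x + l) (s + l))
    (hg_cont : Continuous g)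
    (hg_mono : StrictMonoOn g (Set.Ici 0))
    (hg_zero : ∀ x ≤ (0:ℝ), g x = 0)
    (hL : 0 < L)
    (hv_cont : ContinuousOn v (Set.Icc 0 L))
    (hv_nonneg : ∀ x ∈ Set.Icc (0:ℝ) L, 0 ≤ v x)
    (hv_sub : ∀ x ∈ Set.Icc (0:ℝ) L, v x ≤ ∫ s in (0:ℝ)..x, k x s * g (v s))
    (hu_cont : ContinuousOn u (Set.Icc 0 L))
    (hu_pos : ∀ x ∈ Set.Ioc (0:ℝ) L, 0 < u x)
    (hu_sol : ∀ x ∈ Set.Icc (0:ℝ) L, u x = ∫ s in (0:ℝ)..x, k x s * g (u s)) :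
    ∀ x ∈ Set.Icc (0:ℝ) L, v x ≤ u x :=
  subsolution_le_solution_general k g u v L hk_nonneg hk_int hK_mono hk_trans hg_cont hg_mono
    hg_zero hv_cont hv_sub hu_cont hu_pos hu_sol
end

section
/- Let α ∈ (−1,0) and g(x) = (x³ − 3x² + 3x)/B(α+1, −α) for x ≥ 0 (and g = 0 for x < 0). Then g is continuous and strictly increasing on [0,∞), and both constant functions u₁ ≡ 1 and u₂ ≡ 2 are solutions of u(x) = ∫₀ˣ (x−s)^α s^{−α−1} g(u(s)) ds; in particular this equation has at least two distinct positive solutions. -/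
/-!
The substitution `s = x - x t` turns `∫₀ˣ (x - s)^α s^(-α-1) ds` into `x⁰ · B(α+1, -α) = B(α+1, -α)`,
so a constant `M > 0` solves the equation iff `M = g(M) B(α+1, -α) = M³ - 3M² + 3M`, i.e.
`M (M - 1) (M - 2) = 0`. Monotonicity of `g` comes from `x³ - 3x² + 3x = (x - 1)³ + 1`.
-/

open MeasureTheory Set Filter Real

noncomputable def Beta (p q : ℝ) : ℝ := ∫ t in (0:ℝ)..1, t ^ (p - 1) * (1 - t) ^ (q - 1)

lemma intervalIntegrable_rpow_mul_one_sub_rpow {a b : ℝ} (ha : -1 < a) (hb : -1 < b) :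
    IntervalIntegrable (fun t : ℝ => t ^ a * (1 - t) ^ b) volume 0 1 := by
  have hleft : IntervalIntegrable (fun t : ℝ => t ^ a * (1 - t) ^ b) volume 0 (1 / 2) := by
    refine (intervalIntegral.intervalIntegrable_rpow' ha).mul_continuousOn ?_
    refine ContinuousOn.rpow_const (by fun_prop) fun t ht => Or.inl ?_
    rw [uIcc_of_le (by norm_num)] at ht
    linarith [ht.2]
  have hright : IntervalIntegrable (fun t : ℝ => t ^ a * (1 - t) ^ b) volume (1 / 2) 1 := by
    have hpow : IntervalIntegrable (fun t : ℝ => (1 - t) ^ b) volume (1 / 2) 1 := by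
      have := ((intervalIntegral.intervalIntegrable_rpow' hb (a := 0) (b := 1 / 2)).comp_sub_left
        1).symm
      norm_num at this
      exact this
    refine hpow.continuousOn_mul (ContinuousOn.rpow_const (by fun_prop) fun t ht => Or.inl ?_)
    rw [uIcc_of_le (by norm_num)] at ht
    linarith [ht.1]
  exact hleft.trans hright

lemma Beta_pos {p q : ℝ} (hp : 0 < p) (hq : 0 < q) : 0 < Beta p q := by
  refine intervalIntegral.intervalIntegral_pos_of_pos_on
    (intervalIntegrable_rpow_mul_one_sub_rpow (by linarith) (by linarith)) (fun t ht => ?_)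
    zero_lt_one
  exact mul_pos (rpow_pos_of_pos ht.1 _) (rpow_pos_of_pos (sub_pos.2 ht.2) _)

lemma integral_sub_rpow_mul_rpow {x : ℝ} (hx : 0 < x) (a b : ℝ) :
    ∫ s in (0:ℝ)..x, (x - s) ^ a * s ^ b = x ^ (a + b + 1) * Beta (a + 1) (b + 1) := by
  have hsubst := intervalIntegral.integral_comp_sub_mul
    (fun s => (x - s) ^ a * s ^ b) (a := 0) (b := 1) hx.ne' x
  simp only [mul_one, mul_zero, sub_self, sub_zero] at hsubst
  have hscale : ∀ t ∈ uIcc (0:ℝ) 1, (x - (x - x * t)) ^ a * (x - x * t) ^ b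
      = x ^ (a + b) * (t ^ a * (1 - t) ^ b) := by
    intro t ht
    rw [uIcc_of_le zero_le_one] at ht
    rw [sub_sub_cancel, show x - x * t = x * (1 - t) by ring, mul_rpow hx.le ht.1,
      mul_rpow hx.le (sub_nonneg.2 ht.2), rpow_add hx]
    ring
  rw [intervalIntegral.integral_congr hscale, intervalIntegral.integral_const_mul,
    eq_inv_smul_iff₀ hx.ne', smul_eq_mul] at hsubst
  rw [← hsubst, Beta, rpow_add_one hx.ne']
  simp only [add_sub_cancel_right]
  ring

lemma strictMono_cubic : StrictMono fun x : ℝ => x ^ 3 - 3 * x ^ 2 + 3 * x := by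
  have hshift : (fun x : ℝ => x ^ 3 - 3 * x ^ 2 + 3 * x) = fun x => (x - 1) ^ 3 + 1 := by
    funext x; ring
  rw [hshift]
  intro a b hab
  exact add_lt_add_left (Odd.strictMono_pow ⟨1, rfl⟩ (sub_lt_sub_right hab 1)) 1

theorem equation_with_two_constant_solutions
    (α : ℝ) (hα : α ∈ Set.Ioo (-1:ℝ) 0) (g : ℝ → ℝ)
    (hg : g = fun x => if 0 ≤ x then (x ^ 3 - 3 * x ^ 2 + 3 * x) / Beta (α + 1) (-α) else 0) :
    Continuous g ∧
    StrictMonoOn g (Set.Ici 0) ∧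
    (∀ x : ℝ, 0 < x → (1:ℝ) = ∫ s in (0:ℝ)..x, (x - s) ^ α * s ^ (-α - 1) * g 1) ∧
    (∀ x : ℝ, 0 < x → (2:ℝ) = ∫ s in (0:ℝ)..x, (x - s) ^ α * s ^ (-α - 1) * g 2) := by
  have hB : 0 < Beta (α + 1) (-α) := Beta_pos (by linarith [hα.1]) (by linarith [hα.2])
  have hkernel : ∀ x : ℝ, 0 < x →
      ∫ s in (0:ℝ)..x, (x - s) ^ α * s ^ (-α - 1) = Beta (α + 1) (-α) := by
    intro x hx
    rw [integral_sub_rpow_mul_rpow hx, show α + (-α - 1) + 1 = 0 by ring,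
      show -α - 1 + 1 = -α by ring, rpow_zero, one_mul]
  subst hg
  refine ⟨?_, ?_, ?_, ?_⟩
  · exact Continuous.if_le (by fun_prop) continuous_const continuous_const continuous_id
      fun x hx => by simp [← hx]
  · intro a ha b hb hab
    simp only [mem_Ici.1 ha, mem_Ici.1 hb, if_true]
    exact div_lt_div_of_pos_right (strictMono_cubic hab) hB
  all_goals
    intro x hx
    rw [intervalIntegral.integral_mul_const, hkernel x hx]
    norm_num
    field_simp
end
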